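/- arXiv:2503.23532 — 4 statements merged into one kernel-verified Lean document; each statement's English description precedes it below -/
import Mathlib

section
/- Let E be a finite-dimensional real normed vector space, let ω be a continuous alternating bilinear form on E, let U ⊆ ℝ^n be open, and let f : ℝ × U → E be a C² map, written f(t,x). Assume the Lagrangian condition: ω(∂_i f(t,x), ∂_j f(t,x)) = 0 for all (t,x) ∈ ℝ × U and all 1 ≤ i, j ≤ n, where ∂_i denotes the partial derivative in the i-th coordinate direction of U and ∂_t the partial derivative in the first variable t. Then the time-dependent 1-form θ_t with components θ_{t,j}(x) = ω(∂_t f(t,x), ∂_j f(t,x)) is closed: ∂_i [ω(∂_t f, ∂_j f)] = ∂_j [ω(∂_t f, ∂_i f)] at every point of ℝ × U and for all i, j. -/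
/-- (flat-target Lemma 2.9) If `f : ℝ × U → E` is C² and each slice `f_t` is
Lagrangian for the constant-coefficient alternating bilinear form `ω`
(`ω(∂_i f, ∂_j f) = 0` on `ℝ × U`), then the time-dependent 1-form with components
`θ_{t,j} = ω(∂_t f, ∂_j f)` is closed: `∂_i[ω(∂_t f, ∂_j f)] = ∂_j[ω(∂_t f, ∂_i f)]`. -/
theorem stmt_7 (E : Type*) [NormedAddCommGroup E] [NormedSpace ℝ E] [FiniteDimensional ℝ E]
    (ω : E →ₗ[ℝ] E →ₗ[ℝ] ℝ) (hω : ∀ x : E, ω x x = 0)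
    (n : ℕ) (U : Set (Fin n → ℝ)) (hU : IsOpen U)
    (f : ℝ × (Fin n → ℝ) → E) (hf : ContDiffOn ℝ 2 f (Set.univ ×ˢ U))
    (hLag : ∀ p ∈ Set.univ ×ˢ U, ∀ i j : Fin n,
      ω (fderiv ℝ f p (0, Pi.single i 1)) (fderiv ℝ f p (0, Pi.single j 1)) = 0) :
    ∀ p ∈ Set.univ ×ˢ U, ∀ i j : Fin n,
      fderiv ℝ (fun q : ℝ × (Fin n → ℝ) =>
          ω (fderiv ℝ f q (1, 0)) (fderiv ℝ f q (0, Pi.single j 1))) p (0, Pi.single i 1) =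
      fderiv ℝ (fun q : ℝ × (Fin n → ℝ) =>
          ω (fderiv ℝ f q (1, 0)) (fderiv ℝ f q (0, Pi.single i 1))) p (0, Pi.single j 1) := by
  -- antisymmetry
  have hanti : ∀ x y : E, ω x y = -ω y x := by
    intro x y
    have h := hω (x + y)
    simp [map_add, LinearMap.add_apply, hω] at h
    linarith
  -- continuous version of ω
  set ω₁ : E →ₗ[ℝ] (E →L[ℝ] ℝ) :=
    { toFun := fun x => LinearMap.toContinuousLinearMap (ω x)
      map_add' := by intro a b; ext z; simp
      map_smul' := by intro a b; ext z; simp } with hω₁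
  set Ω : E →L[ℝ] E →L[ℝ] ℝ := LinearMap.toContinuousLinearMap ω₁ with hΩ
  have hΩapp : ∀ x y : E, Ω x y = ω x y := fun x y => rfl
  set S : Set (ℝ × (Fin n → ℝ)) := Set.univ ×ˢ U with hS
  have hSopen : IsOpen S := isOpen_univ.prod hU
  intro p hp i j
  have hpn : S ∈ nhds p := hSopen.mem_nhds hp
  set g := fderiv ℝ f with hg
  have hgC1 : ContDiffOn ℝ 1 g S := hf.fderiv_of_isOpen hSopen (by norm_num)
  have hgd : DifferentiableAt ℝ g p :=
    ((hgC1 p hp).differentiableWithinAt one_ne_zero).differentiableAt hpn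
  set g' := fderiv ℝ g p with hg'
  have hgat : HasFDerivAt g g' p := hgd.hasFDerivAt
  -- symmetry of second derivative
  have hsymm : ∀ v w, g' v w = g' w v := by
    have := (hf.contDiffAt hpn).isSymmSndFDerivAt (by simp [minSmoothness_of_isRCLikeNormedField])
    exact this
  -- derivative of q ↦ ω (g q a) (g q b)
  have key : ∀ a b w : ℝ × (Fin n → ℝ),
      fderiv ℝ (fun q => ω (g q a) (g q b)) p w
        = ω (g' w a) (g p b) + ω (g p a) (g' w b) := by
    intro a b w
    have ha : HasFDerivAt (fun q => g q a)
        ((ContinuousLinearMap.apply ℝ E a).comp g') p :=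
      (ContinuousLinearMap.apply ℝ E a).hasFDerivAt.comp p hgat
    have hb : HasFDerivAt (fun q => g q b)
        ((ContinuousLinearMap.apply ℝ E b).comp g') p :=
      (ContinuousLinearMap.apply ℝ E b).hasFDerivAt.comp p hgat
    have hΩa : HasFDerivAt (fun q => Ω (g q a))
        (Ω.comp ((ContinuousLinearMap.apply ℝ E a).comp g')) p :=
      Ω.hasFDerivAt.comp p ha
    have htot := hΩa.clm_apply hb
    have : fderiv ℝ (fun q => Ω (g q a) (g q b)) p =
        (Ω (g p a)).comp ((ContinuousLinearMap.apply ℝ E b).comp g')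
          + (Ω.comp ((ContinuousLinearMap.apply ℝ E a).comp g')).flip (g p b) :=
      htot.fderiv
    have heq : (fun q => ω (g q a) (g q b)) = fun q => Ω (g q a) (g q b) := rfl
    rw [heq, this]
    simp [hΩapp, ContinuousLinearMap.add_apply, ContinuousLinearMap.comp_apply,
      ContinuousLinearMap.flip_apply, ContinuousLinearMap.apply_apply]
    ring
  set et : ℝ × (Fin n → ℝ) := (1, 0) with het
  set ei : ℝ × (Fin n → ℝ) := (0, Pi.single i 1) with hei
  set ej : ℝ × (Fin n → ℝ) := (0, Pi.single j 1) with hej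
  -- differentiate Lagrangian condition
  have hlag0 : ω (g' et ei) (g p ej) + ω (g p ei) (g' et ej) = 0 := by
    have hev : (fun q => ω (g q ei) (g q ej)) =ᶠ[nhds p] (fun _ => (0:ℝ)) := by
      filter_upwards [hpn] with q hq
      exact hLag q hq i j
    have h0 : fderiv ℝ (fun q => ω (g q ei) (g q ej)) p = 0 := by
      rw [hev.fderiv_eq]; exact fderiv_const_apply 0
    have := key ei ej et
    rw [h0] at this
    simpa using this.symm
  rw [key et ej ei, key et ei ej]
  have h1 : g' ei ej = g' ej ei := hsymm ei ej
  have h2 : g' ei et = g' et ei := hsymm ei et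
  have h3 : g' ej et = g' et ej := hsymm ej et
  rw [h1, h2, h3]
  have h4 : ω (g' et ei) (g p ej) = ω (g' et ej) (g p ei) := by
    have h5 := hanti (g p ei) (g' et ej)
    linarith
  rw [h4]
end

section
/- Let E be a finite-dimensional real normed vector space, let η be a continuous alternating n-linear form on E, let U ⊆ ℝ^n be open, and let f : ℝ × U → E be a C² map, written f(t,x). Assume η(∂_1 f(t,x), …, ∂_n f(t,x)) = 0 for all (t,x) ∈ ℝ × U, where ∂_i denotes the partial derivative in the i-th coordinate direction of U and ∂_t the partial derivative in t. Then the time-dependent (n−1)-form φ_t = f_t^*(i_{∂_t f} η) is closed; concretely, Σ_{k=1}^n (−1)^{k−1} ∂_k [ η(∂_t f, ∂_1 f, …, ∂_{k−1} f, ∂_{k+1} f, …, ∂_n f) ] = 0 at every point of ℝ × U. -/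
section Aux

lemma stmt8_succAbove_vals {N : ℕ} (k : Fin (N + 1)) (j : Fin N) :
    ((k.succAbove j : ℕ) = j ∧ (j : ℕ) < k) ∨ ((k.succAbove j : ℕ) = j + 1 ∧ (k : ℕ) ≤ j) := by
  rcases lt_or_ge (Fin.castSucc j) k with h | h
  · left
    rw [Fin.succAbove_of_castSucc_lt _ _ h]
    exact ⟨rfl, by simpa [Fin.lt_def] using h⟩
  · right
    rw [Fin.succAbove_of_le_castSucc _ _ h]
    exact ⟨rfl, by simpa [Fin.le_def] using h⟩

lemma stmt8_neg_one_pow_sum {a b : ℕ} (h : (a + b) % 2 = 1) : (-1 : ℝ) ^ a + (-1) ^ b = 0 := by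
  rcases Nat.even_or_odd a with ha | ha
  · have hb : Odd b := by rcases ha with ⟨c, hc⟩; exact Nat.odd_iff.2 (by omega)
    rw [ha.neg_one_pow, hb.neg_one_pow]; ring
  · have hb : Even b := by rcases ha with ⟨c, hc⟩; refine Nat.even_iff.2 (by omega)
    rw [ha.neg_one_pow, hb.neg_one_pow]; ring

lemma stmt8_alt_cons {M : Type*} [AddCommGroup M] [Module ℝ M] {N : ℕ}
    (g : AlternatingMap ℝ M ℝ (Fin (N + 1))) (v : Fin (N + 1) → M) (k : Fin (N + 1)) (x : M) :
    g (Fin.cons x (fun j => v (k.succAbove j))) = (-1 : ℝ) ^ (k : ℕ) * g (Function.update v k x) := by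
  classical
  have hfun : Fin.cons x (fun j => v (k.succAbove j))
      = (Function.update v k x) ∘ ⇑(k.cycleRange)⁻¹ := by
    funext i
    refine Fin.cases ?_ (fun j => ?_) i <;>
      simp only [Function.comp_apply, Fin.cons_zero, Fin.cons_succ]
    · rw [Equiv.Perm.inv_def, Fin.cycleRange_symm_zero, Function.update_self]
    · rw [Equiv.Perm.inv_def, Fin.cycleRange_symm_succ,
        Function.update_of_ne (k.succAbove_ne j)]
  rw [hfun, g.map_perm, map_inv, Fin.sign_cycleRange]
  simp [Units.smul_def]

lemma stmt8_alt_update {M : Type*} [AddCommGroup M] [Module ℝ M] {N : ℕ}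
    (g : AlternatingMap ℝ M ℝ (Fin (N + 1))) (v : Fin (N + 1) → M) (k : Fin (N + 1)) (x : M) :
    g (Function.update v k x) = (-1 : ℝ) ^ (k : ℕ) * g (Fin.cons x (fun j => v (k.succAbove j))) := by
  rw [stmt8_alt_cons, ← mul_assoc, ← pow_add, Even.neg_one_pow ⟨(k : ℕ), rfl⟩, one_mul]

lemma stmt8_key_cancel {M : Type*} [AddCommGroup M] [Module ℝ M] {N : ℕ}
    (ω : AlternatingMap ℝ M ℝ (Fin N)) (u : Fin (N + 1) → M)
    (C : Fin (N + 1) → Fin (N + 1) → M) (hC : ∀ a b, C a b = C b a) :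
    ∑ k : Fin (N + 1), (-1 : ℝ) ^ (k : ℕ) *
      ∑ j : Fin N, ω (Function.update (fun j' => u (k.succAbove j')) j (C k (k.succAbove j))) = 0 := by
  classical
  cases N with
  | zero => simp
  | succ M =>
    set t : Fin (M + 2) × Fin (M + 1) → ℝ := fun a =>
      (-1 : ℝ) ^ (a.1 : ℕ) *
        ω (Function.update (fun j' => u (a.1.succAbove j')) a.2 (C a.1 (a.1.succAbove a.2)))
      with ht
    have hex : ∀ (k : Fin (M + 2)) (j : Fin (M + 1)), ∃ j2 : Fin (M + 1),
        (k.succAbove j).succAbove j2 = k := by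
      intro k j
      have : k ∈ Set.range ((k.succAbove j).succAbove) := by
        rw [Fin.range_succAbove]
        exact (k.succAbove_ne j).symm
      exact this
    set inv : Fin (M + 2) × Fin (M + 1) → Fin (M + 2) × Fin (M + 1) := fun a =>
      ⟨a.1.succAbove a.2, Classical.choose (hex a.1 a.2)⟩ with hinvdef
    have hinv : ∀ a, (inv a).1.succAbove (inv a).2 = a.1 := fun a =>
      Classical.choose_spec (hex a.1 a.2)
    have hcanon : ∀ a : Fin (M + 2) × Fin (M + 1),
        t a = (-1 : ℝ) ^ ((a.1 : ℕ) + (a.2 : ℕ)) *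
          ω (Fin.cons (C a.1 (a.1.succAbove a.2))
            (fun i => u (a.1.succAbove (a.2.succAbove i)))) := by
      rintro ⟨k, j⟩
      rw [ht]
      dsimp only
      rw [stmt8_alt_update ω _ j _, ← mul_assoc, ← pow_add]
    have hrange : ∀ (k : Fin (M + 2)) (j : Fin (M + 1)),
        Set.range (fun i : Fin M => k.succAbove (j.succAbove i))
          = ({k, k.succAbove j}ᶜ : Set (Fin (M + 2))) := by
      intro k j
      ext x
      simp only [Set.mem_range, Set.mem_compl_iff, Set.mem_insert_iff, Set.mem_singleton_iff]
      constructor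
      · rintro ⟨i, rfl⟩
        push_neg
        refine ⟨k.succAbove_ne _, fun h => j.succAbove_ne i ?_⟩
        exact Fin.succAbove_right_injective h
      · intro h
        push_neg at h
        obtain ⟨y, hy⟩ : x ∈ Set.range k.succAbove := by
          rw [Fin.range_succAbove]; exact h.1
        have hyj : y ≠ j := fun he => h.2 (by rw [← hy, he])
        obtain ⟨i, hi⟩ : y ∈ Set.range j.succAbove := by
          rw [Fin.range_succAbove]; exact hyj
        exact ⟨i, by rw [hi, hy]⟩
    have hidx : ∀ (k : Fin (M + 2)) (j : Fin (M + 1)) (k' : Fin (M + 2)) (j' : Fin (M + 1)),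
        k.succAbove j = k' → k'.succAbove j' = k →
        (fun i : Fin M => k.succAbove (j.succAbove i))
          = fun i => k'.succAbove (j'.succAbove i) := by
      intro k j k' j' h1 h2
      have hsm1 : StrictMono fun i : Fin M => k.succAbove (j.succAbove i) :=
        (Fin.strictMono_succAbove k).comp (Fin.strictMono_succAbove j)
      have hsm2 : StrictMono fun i : Fin M => k'.succAbove (j'.succAbove i) :=
        (Fin.strictMono_succAbove k').comp (Fin.strictMono_succAbove j')
      have hwf : WellFoundedLT (Fin M) := inferInstance
      refine (StrictMono.range_inj hsm1 hsm2).1 ?_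
      rw [hrange, hrange, h1, h2, Set.pair_comm]
    have hcancel : ∀ a, t a + t (inv a) = 0 := by
      intro a
      have h1 : (inv a).1.succAbove (inv a).2 = a.1 := hinv a
      have hfst : (inv a).1 = a.1.succAbove a.2 := rfl
      rw [hcanon, hcanon]
      rw [hfst] at h1 ⊢
      have hfun : (fun i : Fin M => u ((a.1.succAbove a.2).succAbove ((inv a).2.succAbove i)))
          = fun i => u (a.1.succAbove (a.2.succAbove i)) := by
        have h := hidx a.1 a.2 (a.1.succAbove a.2) (inv a).2 rfl h1
        funext i
        exact (congrArg u (congrFun h i)).symm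
      rw [h1, hC (a.1.succAbove a.2) a.1, hfun]
      have hv1 := stmt8_succAbove_vals a.1 a.2
      have hv2 := stmt8_succAbove_vals (a.1.succAbove a.2) (inv a).2
      rw [h1] at hv2
      have hpar : (((a.1 : ℕ) + (a.2 : ℕ))
          + (((a.1.succAbove a.2 : ℕ)) + ((inv a).2 : ℕ))) % 2 = 1 := by omega
      have hs := stmt8_neg_one_pow_sum hpar
      set z := ω (Fin.cons (C a.1 (a.1.succAbove a.2)) fun i => u (a.1.succAbove (a.2.succAbove i)))
      have hh : (-1 : ℝ) ^ ((a.1 : ℕ) + (a.2 : ℕ))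
          = -(-1 : ℝ) ^ (((a.1.succAbove a.2 : ℕ)) + ((inv a).2 : ℕ)) := by linarith
      rw [hh]; ring
    have hne : ∀ a : Fin (M + 2) × Fin (M + 1), t a ≠ 0 → inv a ≠ a := by
      intro a _ h
      exact a.1.succAbove_ne a.2 (congrArg Prod.fst h)
    have hinvinv : ∀ a, inv (inv a) = a := by
      rintro ⟨k, j⟩
      have h1 : (k.succAbove j).succAbove (inv (k, j)).2 = k := hinv (k, j)
      have hfst : (inv (inv (k, j))).1 = k := h1
      refine Prod.ext hfst ?_
      have h2 := hinv (inv (k, j))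
      rw [hfst] at h2
      have hfst2 : (inv (k, j)).1 = k.succAbove j := rfl
      rw [hfst2] at h2
      exact Fin.succAbove_right_injective h2
    calc ∑ k : Fin (M + 2), (-1 : ℝ) ^ (k : ℕ) *
          ∑ j : Fin (M + 1), ω (Function.update (fun j' => u (k.succAbove j')) j
            (C k (k.succAbove j)))
        = ∑ a : Fin (M + 2) × Fin (M + 1), t a := by
          rw [← Finset.univ_product_univ, Finset.sum_product]
          simp [ht, Finset.mul_sum]
      _ = 0 := Finset.sum_ninvolution inv hcancel hne (fun a => Finset.mem_univ _) hinvinv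

lemma stmt8_exists_cont (E : Type*) [NormedAddCommGroup E] [NormedSpace ℝ E]
    [FiniteDimensional ℝ E] (n : ℕ) (η : AlternatingMap ℝ E ℝ (Fin (n + 1))) :
    ∃ η' : ContinuousMultilinearMap ℝ (fun _ : Fin (n + 1) => E) ℝ, ∀ m, η' m = η m := by
  classical
  set b := Module.finBasis ℝ E with hb
  refine ⟨∑ r : Fin (n + 1) → Fin (Module.finrank ℝ E), η (fun i => b (r i)) •
    (ContinuousMultilinearMap.mkPiAlgebra ℝ (Fin (n + 1)) ℝ).compContinuousLinearMap
      (fun i => LinearMap.toContinuousLinearMap (b.coord (r i))), ?_⟩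
  intro m
  have hm : η m = η (fun i => ∑ j, b.repr (m i) j • b j) := by
    congr 1
    funext i
    exact (b.sum_repr (m i)).symm
  rw [hm]
  rw [show (η (fun i => ∑ j, b.repr (m i) j • b j)) =
    η.toMultilinearMap (fun i => ∑ j, b.repr (m i) j • b j) from rfl]
  rw [MultilinearMap.map_sum]
  simp only [MultilinearMap.map_smul_univ]
  simp [Module.Basis.coord_apply, smul_eq_mul, mul_comm]

lemma stmt8_hderiv {E : Type*} [NormedAddCommGroup E] [NormedSpace ℝ E] {n : ℕ}
    (η' : ContinuousMultilinearMap ℝ (fun _ : Fin (n + 1) => E) ℝ)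
    {V : Type*} [NormedAddCommGroup V] [NormedSpace ℝ V]
    (f : V → E) (p : V) (hdf : DifferentiableAt ℝ (fderiv ℝ f) p)
    (v : Fin (n + 1) → V) (w : V) :
    fderiv ℝ (fun q => η' fun i => fderiv ℝ f q (v i)) p w
      = ∑ i, η' (Function.update (fun i => fderiv ℝ f p (v i)) i
          (fderiv ℝ (fderiv ℝ f) p w (v i))) := by
  classical
  have hcomp : ∀ i : Fin (n + 1), HasFDerivAt (fun q => fderiv ℝ f q (v i))
      ((ContinuousLinearMap.apply ℝ E (v i)).comp (fderiv ℝ (fderiv ℝ f) p)) p :=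
    fun i => (ContinuousLinearMap.apply ℝ E (v i)).hasFDerivAt.comp p hdf.hasFDerivAt
  have H := HasFDerivAt.multilinear_comp η' hcomp
  rw [H.fderiv]
  simp [ContinuousLinearMap.sum_apply]

end Aux

/-- (flat-target Lemma 2.10) If `f : ℝ × U → E` is C² with `U ⊆ ℝ^(n+1)` open
and the constant-coefficient alternating `(n+1)`-form `η` pulls back to zero on each slice
(`η(∂_1 f, …, ∂_{n+1} f) = 0`), then the time-dependent `n`-form `φ_t = f_t^*(i_{∂_t f} η)`
is closed: `Σ_k (−1)^k ∂_k[η(∂_t f, ∂_1 f, …, ∂̂_k f, …, ∂_{n+1} f)] = 0`. -/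
theorem stmt_8 (E : Type*) [NormedAddCommGroup E] [NormedSpace ℝ E] [FiniteDimensional ℝ E]
    (n : ℕ) (η : AlternatingMap ℝ E ℝ (Fin (n + 1)))
    (U : Set (Fin (n + 1) → ℝ)) (hU : IsOpen U)
    (f : ℝ × (Fin (n + 1) → ℝ) → E) (hf : ContDiffOn ℝ 2 f (Set.univ ×ˢ U))
    (hvan : ∀ p ∈ Set.univ ×ˢ U,
      η (fun i : Fin (n + 1) => fderiv ℝ f p (0, Pi.single i 1)) = 0) :
    ∀ p ∈ Set.univ ×ˢ U,
      ∑ k : Fin (n + 1), (-1 : ℝ) ^ (k : ℕ) *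
        fderiv ℝ (fun q : ℝ × (Fin (n + 1) → ℝ) =>
          η (Fin.cons (fderiv ℝ f q (1, 0))
            (fun j : Fin n => fderiv ℝ f q (0, Pi.single (k.succAbove j) 1))))
          p (0, Pi.single k 1) = 0 := by
  classical
  intro p hp
  obtain ⟨η', hη'⟩ := stmt8_exists_cont E n η
  set e : Fin (n + 1) → ℝ × (Fin (n + 1) → ℝ) := fun i => (0, Pi.single i 1) with he
  set T : ℝ × (Fin (n + 1) → ℝ) := (1, 0) with hT
  have hs : IsOpen ((Set.univ : Set ℝ) ×ˢ U) := isOpen_univ.prod hU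
  have hps : (Set.univ : Set ℝ) ×ˢ U ∈ nhds p := hs.mem_nhds hp
  have hfp : ContDiffAt ℝ 2 f p := hf.contDiffAt hps
  have hDf : ContDiffAt ℝ 1 (fderiv ℝ f) p := hfp.fderiv_right (by norm_num)
  have hdf : DifferentiableAt ℝ (fderiv ℝ f) p := hDf.differentiableAt one_ne_zero
  set B := fderiv ℝ (fderiv ℝ f) p with hB
  have hsymm : ∀ a b, B a b = B b a := hfp.isSymmSndFDerivAt (by norm_num)
  set u : Fin (n + 1) → E := fun i => fderiv ℝ f p (e i) with hu
  -- each summand of the goal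
  have hterm : ∀ k : Fin (n + 1),
      fderiv ℝ (fun q : ℝ × (Fin (n + 1) → ℝ) =>
          η (Fin.cons (fderiv ℝ f q (1, 0))
            (fun j : Fin n => fderiv ℝ f q (0, Pi.single (k.succAbove j) 1)))) p (e k)
      = η' (Fin.cons (B (e k) T) (fun j => u (k.succAbove j)))
        + ∑ j : Fin n, η' (Fin.cons (fderiv ℝ f p T)
            (Function.update (fun j' => u (k.succAbove j')) j (B (e k) (e (k.succAbove j))))) := by
    intro k
    have hfe : (fun q : ℝ × (Fin (n + 1) → ℝ) =>
          η (Fin.cons (fderiv ℝ f q (1, 0))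
            (fun j : Fin n => fderiv ℝ f q (0, Pi.single (k.succAbove j) 1))))
        = fun q => η' (fun i => fderiv ℝ f q ((Fin.cons T (fun j => e (k.succAbove j)) : Fin (n + 1) → ℝ × (Fin (n + 1) → ℝ)) i)) := by
      funext q
      rw [hη']
      congr 1
      funext i
      refine Fin.cases ?_ (fun j => ?_) i <;> simp [he, hT]
    rw [hfe, stmt8_hderiv η' f p hdf (Fin.cons T (fun j => e (k.succAbove j)) : Fin (n + 1) → ℝ × (Fin (n + 1) → ℝ)) (e k), ← hB]
    have hbase : (fun i => fderiv ℝ f p ((Fin.cons T (fun j => e (k.succAbove j)) : Fin (n + 1) → ℝ × (Fin (n + 1) → ℝ)) i))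
        = Fin.cons (fderiv ℝ f p T) (fun j => u (k.succAbove j)) := by
      funext i
      refine Fin.cases ?_ (fun j => ?_) i <;> simp [hu]
    rw [hbase, Fin.sum_univ_succ]
    congr 1
    · rw [Fin.cons_zero, Fin.update_cons_zero]
    · refine Finset.sum_congr rfl fun j _ => ?_
      rw [Fin.cons_succ, ← Fin.cons_update]
  -- part A vanishes
  have hA : ∑ k : Fin (n + 1), (-1 : ℝ) ^ (k : ℕ) *
      η' (Fin.cons (B (e k) T) (fun j => u (k.succAbove j))) = 0 := by
    have h1 : ∀ k : Fin (n + 1), η' (Fin.cons (B (e k) T) (fun j => u (k.succAbove j)))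
        = (-1 : ℝ) ^ (k : ℕ) * η' (Function.update u k (B T (e k))) := by
      intro k
      rw [hη', stmt8_alt_cons η u k (B (e k) T), hsymm (e k) T, ← hη']
    have h3 := stmt8_hderiv η' f p hdf e T
    rw [← hB, ← hu] at h3
    have h4 : fderiv ℝ (fun q => η' fun i => fderiv ℝ f q (e i)) p = 0 := by
      have hv : (fun q => η' fun i => fderiv ℝ f q (e i)) =ᶠ[nhds p] (fun _ => 0) := by
        filter_upwards [hps] with q hq
        rw [hη']
        simpa [he] using hvan q hq
      rw [hv.fderiv_eq]
      exact fderiv_const_apply 0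
    calc ∑ k : Fin (n + 1), (-1 : ℝ) ^ (k : ℕ) *
          η' (Fin.cons (B (e k) T) (fun j => u (k.succAbove j)))
        = ∑ k : Fin (n + 1), η' (Function.update u k (B T (e k))) := by
          refine Finset.sum_congr rfl fun k _ => ?_
          rw [h1 k, ← mul_assoc, ← pow_add, Even.neg_one_pow ⟨(k : ℕ), rfl⟩, one_mul]
      _ = fderiv ℝ (fun q => η' fun i => fderiv ℝ f q (e i)) p T := h3.symm
      _ = 0 := by rw [h4]; rfl
  -- part B vanishes
  have hB0 : ∑ k : Fin (n + 1), (-1 : ℝ) ^ (k : ℕ) *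
      ∑ j : Fin n, η' (Fin.cons (fderiv ℝ f p T)
        (Function.update (fun j' => u (k.succAbove j')) j (B (e k) (e (k.succAbove j))))) = 0 := by
    have hk := stmt8_key_cancel (η.curryLeft (fderiv ℝ f p T)) u
      (fun a b => B (e a) (e b)) (fun a b => hsymm (e a) (e b))
    rw [← hk]
    refine Finset.sum_congr rfl fun k _ => ?_
    congr 1
    refine Finset.sum_congr rfl fun j _ => ?_
    rw [hη']
    rfl
  have hgoal : ∑ k : Fin (n + 1), (-1 : ℝ) ^ (k : ℕ) *
      fderiv ℝ (fun q : ℝ × (Fin (n + 1) → ℝ) =>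
          η (Fin.cons (fderiv ℝ f q (1, 0))
            (fun j : Fin n => fderiv ℝ f q (0, Pi.single (k.succAbove j) 1)))) p (e k) = 0 := by
    calc ∑ k : Fin (n + 1), (-1 : ℝ) ^ (k : ℕ) *
        fderiv ℝ (fun q : ℝ × (Fin (n + 1) → ℝ) =>
          η (Fin.cons (fderiv ℝ f q (1, 0))
            (fun j : Fin n => fderiv ℝ f q (0, Pi.single (k.succAbove j) 1)))) p (e k)
        = ∑ k : Fin (n + 1), ((-1 : ℝ) ^ (k : ℕ) *
            η' (Fin.cons (B (e k) T) (fun j => u (k.succAbove j)))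
          + (-1 : ℝ) ^ (k : ℕ) * ∑ j : Fin n, η' (Fin.cons (fderiv ℝ f p T)
            (Function.update (fun j' => u (k.succAbove j')) j
              (B (e k) (e (k.succAbove j)))))) := by
          refine Finset.sum_congr rfl fun k _ => ?_
          rw [hterm k, mul_add]
      _ = 0 := by rw [Finset.sum_add_distrib, hA, hB0, add_zero]
  simpa only [he] using hgoal
end

section
/- Let E be a finite-dimensional real normed vector space, let ω be a continuous alternating bilinear form on E, and let l : ℝ³ → E be a C² map, written l(u,t,s). Then for every u ∈ ℝ: d/du ∫₀¹ ∫₀¹ ω(∂_t l(u,t,s), ∂_s l(u,t,s)) dt ds = ∫₀¹ ( ω(∂_u l, ∂_s l)(u,1,s) − ω(∂_u l, ∂_s l)(u,0,s) ) ds + ∫₀¹ ( ω(∂_t l, ∂_u l)(u,t,1) − ω(∂_t l, ∂_u l)(u,t,0) ) dt. -/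
open MeasureTheory intervalIntegral Set

lemma swap_le (f : ℝ → ℝ → ℝ) (hf : Continuous (Function.uncurry f)) {a b c d : ℝ}
    (hab : a ≤ b) (hcd : c ≤ d) :
    ∫ s in a..b, ∫ t in c..d, f s t = ∫ t in c..d, ∫ s in a..b, f s t := by
  have hint : Integrable (Function.uncurry f)
      ((volume.restrict (Ioc a b)).prod (volume.restrict (Ioc c d))) := by
    rw [Measure.prod_restrict]
    have : IntegrableOn (Function.uncurry f) (Icc a b ×ˢ Icc c d) (volume.prod volume) :=
      hf.continuousOn.integrableOn_compact (isCompact_Icc.prod isCompact_Icc)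
    exact this.mono_set (Set.prod_mono Ioc_subset_Icc_self Ioc_subset_Icc_self)
  rw [intervalIntegral.integral_of_le hab, intervalIntegral.integral_of_le hcd]
  simp_rw [intervalIntegral.integral_of_le hcd, intervalIntegral.integral_of_le hab]
  exact MeasureTheory.integral_integral_swap hint

lemma swap_gen (f : ℝ → ℝ → ℝ) (hf : Continuous (Function.uncurry f)) (a b c d : ℝ) :
    ∫ s in a..b, ∫ t in c..d, f s t = ∫ t in c..d, ∫ s in a..b, f s t := by
  have hf' : Continuous (Function.uncurry (fun t s => f s t)) := by
    exact hf.comp (continuous_snd.prodMk continuous_fst)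
  rcases le_total a b with hab | hab <;> rcases le_total c d with hcd | hcd
  · exact swap_le f hf hab hcd
  · rw [intervalIntegral.integral_symm d c]
    simp_rw [intervalIntegral.integral_symm d c]
    rw [intervalIntegral.integral_neg, swap_le f hf hab hcd]
  · rw [intervalIntegral.integral_symm b a]
    simp_rw [intervalIntegral.integral_symm b a]
    rw [intervalIntegral.integral_neg, swap_le f hf hab hcd]
  · rw [intervalIntegral.integral_symm b a, intervalIntegral.integral_symm d c]
    simp_rw [intervalIntegral.integral_symm d c, intervalIntegral.integral_symm b a]
    rw [intervalIntegral.integral_neg, intervalIntegral.integral_neg,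
      swap_le f hf hab hcd]

lemma hasDerivAt_double (f f' : ℝ → ℝ → ℝ → ℝ)
    (hf : Continuous fun p : ℝ × ℝ × ℝ => f p.1 p.2.1 p.2.2)
    (hf' : Continuous fun p : ℝ × ℝ × ℝ => f' p.1 p.2.1 p.2.2)
    (hd : ∀ u t s : ℝ, HasDerivAt (fun u => f u t s) (f' u t s) u) (u₀ : ℝ) :
    HasDerivAt (fun u => ∫ s in (0:ℝ)..1, ∫ t in (0:ℝ)..1, f u t s)
      (∫ s in (0:ℝ)..1, ∫ t in (0:ℝ)..1, f' u₀ t s) u₀ := by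
  -- inner parametric integrals are continuous
  have hG' : Continuous fun p : ℝ × ℝ => ∫ t in (0:ℝ)..1, f' p.1 t p.2 := by
    apply intervalIntegral.continuous_parametric_intervalIntegral_of_continuous'
    exact hf'.comp (by fun_prop : Continuous fun q : (ℝ × ℝ) × ℝ => (q.1.1, q.2, q.1.2))
  have hG : Continuous fun p : ℝ × ℝ => ∫ t in (0:ℝ)..1, f p.1 t p.2 := by
    apply intervalIntegral.continuous_parametric_intervalIntegral_of_continuous'
    exact hf.comp (by fun_prop : Continuous fun q : (ℝ × ℝ) × ℝ => (q.1.1, q.2, q.1.2))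
  set c : ℝ → ℝ := fun u => ∫ s in (0:ℝ)..1, ∫ t in (0:ℝ)..1, f' u t s with hc_def
  have hc : Continuous c := by
    apply intervalIntegral.continuous_parametric_intervalIntegral_of_continuous'
      (f := fun u s => ∫ t in (0:ℝ)..1, f' u t s)
    exact hG'
  have key : ∀ u : ℝ, (∫ v in u₀..u, c v) =
      (∫ s in (0:ℝ)..1, ∫ t in (0:ℝ)..1, f u t s)
        - (∫ s in (0:ℝ)..1, ∫ t in (0:ℝ)..1, f u₀ t s) := by
    intro u
    have h1 : (∫ v in u₀..u, c v) =
        ∫ s in (0:ℝ)..1, ∫ v in u₀..u, ∫ t in (0:ℝ)..1, f' v t s := by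
      exact swap_gen (fun v s => ∫ t in (0:ℝ)..1, f' v t s) hG' u₀ u 0 1
    have h2 : ∀ s : ℝ, (∫ v in u₀..u, ∫ t in (0:ℝ)..1, f' v t s) =
        ∫ t in (0:ℝ)..1, ∫ v in u₀..u, f' v t s := by
      intro s
      exact swap_gen (fun v t => f' v t s)
        (hf'.comp (by fun_prop : Continuous fun q : ℝ × ℝ => (q.1, q.2, s))) u₀ u 0 1
    have h3 : ∀ t s : ℝ, (∫ v in u₀..u, f' v t s) = f u t s - f u₀ t s := by
      intro t s
      exact intervalIntegral.integral_eq_sub_of_hasDerivAt (fun v _ => hd v t s)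
        ((hf'.comp (by fun_prop : Continuous fun v : ℝ => (v, t, s))).intervalIntegrable u₀ u)
    rw [h1]
    have h4 : ∀ s : ℝ, (∫ v in u₀..u, ∫ t in (0:ℝ)..1, f' v t s) =
        (∫ t in (0:ℝ)..1, f u t s) - ∫ t in (0:ℝ)..1, f u₀ t s := by
      intro s
      rw [h2 s]
      simp_rw [h3]
      exact intervalIntegral.integral_sub
        ((hf.comp (by fun_prop : Continuous fun t : ℝ => (u, t, s))).intervalIntegrable 0 1)
        ((hf.comp (by fun_prop : Continuous fun t : ℝ => (u₀, t, s))).intervalIntegrable 0 1)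
    simp_rw [h4]
    exact intervalIntegral.integral_sub
      ((hG.comp (by fun_prop : Continuous fun s : ℝ => (u, s))).intervalIntegrable 0 1)
      ((hG.comp (by fun_prop : Continuous fun s : ℝ => (u₀, s))).intervalIntegrable 0 1)
  have hprim : HasDerivAt (fun u => ∫ v in u₀..u, c v) (c u₀) u₀ :=
    intervalIntegral.integral_hasDerivAt_right (hc.intervalIntegrable u₀ u₀)
      (hc.stronglyMeasurableAtFilter _ _) hc.continuousAt
  have heq : (fun u => ∫ s in (0:ℝ)..1, ∫ t in (0:ℝ)..1, f u t s) =
      fun u => (∫ s in (0:ℝ)..1, ∫ t in (0:ℝ)..1, f u₀ t s) + ∫ v in u₀..u, c v := by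
    funext u; rw [key u]; ring
  rw [heq]
  exact ((hasDerivAt_const u₀ (∫ s in (0:ℝ)..1, ∫ t in (0:ℝ)..1, f u₀ t s)).add hprim).congr_deriv (zero_add _)

set_option maxHeartbeats 1000000 in
/-- (flat-target Stokes step of Claim 3.4) For a C² map `l : ℝ³ → E` and a
constant-coefficient alternating bilinear form `ω`, the `u`-derivative of
`∫₀¹∫₀¹ ω(∂_t l, ∂_s l) dt ds` equals the sum of the boundary integrals
`∫₀¹ (ω(∂_u l, ∂_s l)(u,1,s) − ω(∂_u l, ∂_s l)(u,0,s)) ds`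
and `∫₀¹ (ω(∂_t l, ∂_u l)(u,t,1) − ω(∂_t l, ∂_u l)(u,t,0)) dt`. -/
theorem stmt_10 (E : Type*) [NormedAddCommGroup E] [NormedSpace ℝ E] [FiniteDimensional ℝ E]
    (ω : E →ₗ[ℝ] E →ₗ[ℝ] ℝ) (hω : ∀ x : E, ω x x = 0)
    (l : ℝ × ℝ × ℝ → E) (hl : ContDiff ℝ 2 l) :
    ∀ u : ℝ,
      HasDerivAt (fun u' : ℝ => ∫ s in (0:ℝ)..1, ∫ t in (0:ℝ)..1,
          ω (fderiv ℝ l (u', t, s) (0, 1, 0)) (fderiv ℝ l (u', t, s) (0, 0, 1)))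
        ((∫ s in (0:ℝ)..1,
            (ω (fderiv ℝ l (u, 1, s) (1, 0, 0)) (fderiv ℝ l (u, 1, s) (0, 0, 1)) -
              ω (fderiv ℝ l (u, 0, s) (1, 0, 0)) (fderiv ℝ l (u, 0, s) (0, 0, 1)))) +
          (∫ t in (0:ℝ)..1,
            (ω (fderiv ℝ l (u, t, 1) (0, 1, 0)) (fderiv ℝ l (u, t, 1) (1, 0, 0)) -
              ω (fderiv ℝ l (u, t, 0) (0, 1, 0)) (fderiv ℝ l (u, t, 0) (1, 0, 0))))) u := by
  intro u
  have hanti : ∀ x y : E, ω x y = -(ω y x) := by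
    intro x y
    have h := hω (x + y)
    simp only [map_add, LinearMap.add_apply, hω] at h
    linarith
  set B : E →L[ℝ] E →L[ℝ] ℝ :=
    LinearMap.toContinuousLinearMap
      ((LinearMap.toContinuousLinearMap :
          (E →ₗ[ℝ] ℝ) ≃ₗ[ℝ] (E →L[ℝ] ℝ)).toLinearMap.comp ω) with hB_def
  have hBω : ∀ x y, B x y = ω x y := fun x y => rfl
  set D : ℝ × ℝ × ℝ → (ℝ × ℝ × ℝ →L[ℝ] E) := fderiv ℝ l with hD_def
  have hD : ContDiff ℝ 1 D := hl.fderiv_right (le_refl 2)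
  have hDdiff : Differentiable ℝ D := hD.differentiable one_ne_zero
  have hldiff : Differentiable ℝ l := hl.differentiable two_ne_zero
  have hHcont : Continuous fun p => fderiv ℝ D p := hD.continuous_fderiv one_ne_zero
  have hsymm : ∀ (p v w : ℝ × ℝ × ℝ), fderiv ℝ D p v w = fderiv ℝ D p w v := fun p v w =>
    second_derivative_symmetric (fun y => (hldiff y).hasFDerivAt) ((hDdiff p).hasFDerivAt) v w
  have hDvcont : ∀ v : ℝ × ℝ × ℝ, Continuous fun p => D p v := fun v =>
    (ContinuousLinearMap.apply ℝ E v).continuous.comp hD.continuous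
  have hHvw : ∀ v w : ℝ × ℝ × ℝ, Continuous fun p => fderiv ℝ D p v w := fun v w =>
    (ContinuousLinearMap.apply ℝ E w).continuous.comp
      ((ContinuousLinearMap.apply ℝ (ℝ × ℝ × ℝ →L[ℝ] E) v).continuous.comp hHcont)
  have hωcont : ∀ {c d : ℝ × ℝ × ℝ → E}, Continuous c → Continuous d →
      Continuous fun p => (ω (c p) (d p) : ℝ) := by
    intro c d hc hd
    exact B.continuous₂.comp (hc.prodMk hd)
  have hline : ∀ (v w dir : ℝ × ℝ × ℝ) (γ : ℝ → ℝ × ℝ × ℝ) (x : ℝ), HasDerivAt γ dir x →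
      HasDerivAt (fun x => (ω (D (γ x) v) (D (γ x) w) : ℝ))
        (ω (fderiv ℝ D (γ x) dir v) (D (γ x) w) + ω (D (γ x) v) (fderiv ℝ D (γ x) dir w)) x := by
    intro v w dir γ x hγ
    have hv : HasFDerivAt (fun p => D p v)
        ((ContinuousLinearMap.apply ℝ E v).comp (fderiv ℝ D (γ x))) (γ x) :=
      (ContinuousLinearMap.apply ℝ E v).hasFDerivAt.comp (γ x) (hDdiff (γ x)).hasFDerivAt
    have hw : HasFDerivAt (fun p => D p w)
        ((ContinuousLinearMap.apply ℝ E w).comp (fderiv ℝ D (γ x))) (γ x) :=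
      (ContinuousLinearMap.apply ℝ E w).hasFDerivAt.comp (γ x) (hDdiff (γ x)).hasFDerivAt
    have hBv : HasFDerivAt (fun p => B (D p v))
        (B.comp ((ContinuousLinearMap.apply ℝ E v).comp (fderiv ℝ D (γ x)))) (γ x) :=
      B.hasFDerivAt.comp (γ x) hv
    have hfd := (hBv.clm_apply hw).comp_hasDerivAt x hγ
    refine hfd.congr_deriv ?_
    simp only [ContinuousLinearMap.add_apply, ContinuousLinearMap.comp_apply,
      ContinuousLinearMap.flip_apply, ContinuousLinearMap.apply_apply]
    rw [hBω, hBω]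
    ring
  -- direction vectors
  set eu : ℝ × ℝ × ℝ := (1, 0, 0) with heu
  set et : ℝ × ℝ × ℝ := (0, 1, 0) with het
  set es : ℝ × ℝ × ℝ := (0, 0, 1) with hes
  have hline_u : ∀ t s x : ℝ, HasDerivAt (fun x : ℝ => ((x, t, s) : ℝ × ℝ × ℝ)) eu x :=
    fun t s x => (hasDerivAt_id x).prodMk ((hasDerivAt_const x t).prodMk (hasDerivAt_const x s))
  have hline_t : ∀ u s x : ℝ, HasDerivAt (fun x : ℝ => ((u, x, s) : ℝ × ℝ × ℝ)) et x :=
    fun u s x => (hasDerivAt_const x u).prodMk ((hasDerivAt_id x).prodMk (hasDerivAt_const x s))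
  have hline_s : ∀ u t x : ℝ, HasDerivAt (fun x : ℝ => ((u, t, x) : ℝ × ℝ × ℝ)) es x :=
    fun u t x => (hasDerivAt_const x u).prodMk ((hasDerivAt_const x t).prodMk (hasDerivAt_id x))
  -- the integrand and its u-derivative
  set f : ℝ → ℝ → ℝ → ℝ := fun u t s => ω (D (u, t, s) et) (D (u, t, s) es) with hf_def
  set f' : ℝ → ℝ → ℝ → ℝ := fun u t s =>
    ω (fderiv ℝ D (u, t, s) eu et) (D (u, t, s) es)
      + ω (D (u, t, s) et) (fderiv ℝ D (u, t, s) eu es) with hf'_def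
  have hf : Continuous fun p : ℝ × ℝ × ℝ => f p.1 p.2.1 p.2.2 :=
    hωcont (hDvcont et) (hDvcont es)
  have hf' : Continuous fun p : ℝ × ℝ × ℝ => f' p.1 p.2.1 p.2.2 :=
    (hωcont (hHvw eu et) (hDvcont es)).add (hωcont (hDvcont et) (hHvw eu es))
  have hd : ∀ u t s : ℝ, HasDerivAt (fun u => f u t s) (f' u t s) u := fun u t s =>
    hline et es eu (fun x => (x, t, s)) u (hline_u t s u)
  have main := hasDerivAt_double f f' hf hf' hd u
  -- now identify the derivative value with the boundary integrals
  have key : (∫ s in (0:ℝ)..1, ∫ t in (0:ℝ)..1, f' u t s) =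
      (∫ s in (0:ℝ)..1,
          ((ω (D (u, 1, s) eu) (D (u, 1, s) es) : ℝ) - ω (D (u, 0, s) eu) (D (u, 0, s) es)))
        + (∫ t in (0:ℝ)..1,
          ((ω (D (u, t, 1) et) (D (u, t, 1) eu) : ℝ) - ω (D (u, t, 0) et) (D (u, t, 0) eu))) := by
    -- split f' into a t-derivative and an s-derivative
    set P : ℝ → ℝ → ℝ := fun t s =>
      (ω (fderiv ℝ D (u, t, s) et eu) (D (u, t, s) es) : ℝ)
        + ω (D (u, t, s) eu) (fderiv ℝ D (u, t, s) et es) with hP_def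
    set Q : ℝ → ℝ → ℝ := fun t s =>
      (ω (fderiv ℝ D (u, t, s) es et) (D (u, t, s) eu) : ℝ)
        + ω (D (u, t, s) et) (fderiv ℝ D (u, t, s) es eu) with hQ_def
    have hPcont : Continuous fun q : ℝ × ℝ => P q.1 q.2 := by
      have h1 := (hωcont (hHvw et eu) (hDvcont es)).add (hωcont (hDvcont eu) (hHvw et es))
      exact h1.comp (by fun_prop : Continuous fun q : ℝ × ℝ => ((u, q.1, q.2) : ℝ × ℝ × ℝ))
    have hQcont : Continuous fun q : ℝ × ℝ => Q q.1 q.2 := by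
      have h1 := (hωcont (hHvw es et) (hDvcont eu)).add (hωcont (hDvcont et) (hHvw es eu))
      exact h1.comp (by fun_prop : Continuous fun q : ℝ × ℝ => ((u, q.1, q.2) : ℝ × ℝ × ℝ))
    have hsplit : ∀ t s : ℝ, f' u t s = P t s + Q t s := by
      intro t s
      simp only [hf'_def, hP_def, hQ_def]
      rw [hsymm (u, t, s) et eu, hsymm (u, t, s) es et, hsymm (u, t, s) es eu]
      rw [hanti (D (u, t, s) eu) (fderiv ℝ D (u, t, s) et es),
        hanti (fderiv ℝ D (u, t, s) et es) (D (u, t, s) eu)]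
      ring
    -- FTC in t for P
    have hFTC_t : ∀ s : ℝ, (∫ t in (0:ℝ)..1, P t s) =
        (ω (D (u, 1, s) eu) (D (u, 1, s) es) : ℝ) - ω (D (u, 0, s) eu) (D (u, 0, s) es) := by
      intro s
      exact intervalIntegral.integral_eq_sub_of_hasDerivAt
        (fun t _ => hline eu es et (fun x => (u, x, s)) t (hline_t u s t))
        ((hPcont.comp (by fun_prop : Continuous fun t : ℝ => ((t, s) : ℝ × ℝ))).intervalIntegrable 0 1)
    -- FTC in s for Q
    have hFTC_s : ∀ t : ℝ, (∫ s in (0:ℝ)..1, Q t s) =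
        (ω (D (u, t, 1) et) (D (u, t, 1) eu) : ℝ) - ω (D (u, t, 0) et) (D (u, t, 0) eu) := by
      intro t
      exact intervalIntegral.integral_eq_sub_of_hasDerivAt
        (fun s _ => hline et eu es (fun x => (u, t, x)) s (hline_s u t s))
        ((hQcont.comp (by fun_prop : Continuous fun s : ℝ => ((t, s) : ℝ × ℝ))).intervalIntegrable 0 1)
    have hPint : ∀ s : ℝ, IntervalIntegrable (fun t => P t s) volume 0 1 := fun s =>
      (hPcont.comp (by fun_prop : Continuous fun t : ℝ => ((t, s) : ℝ × ℝ))).intervalIntegrable 0 1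
    have hQint : ∀ s : ℝ, IntervalIntegrable (fun t => Q t s) volume 0 1 := fun s =>
      (hQcont.comp (by fun_prop : Continuous fun t : ℝ => ((t, s) : ℝ × ℝ))).intervalIntegrable 0 1
    have step1 : ∀ s : ℝ, (∫ t in (0:ℝ)..1, f' u t s) =
        (∫ t in (0:ℝ)..1, P t s) + ∫ t in (0:ℝ)..1, Q t s := by
      intro s
      simp_rw [hsplit]
      exact intervalIntegral.integral_add (hPint s) (hQint s)
    simp_rw [step1]
    have hIPcont : Continuous fun s : ℝ => ∫ t in (0:ℝ)..1, P t s := by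
      apply intervalIntegral.continuous_parametric_intervalIntegral_of_continuous'
        (f := fun s t => P t s)
      exact hPcont.comp (by fun_prop : Continuous fun q : ℝ × ℝ => ((q.2, q.1) : ℝ × ℝ))
    have hIQcont : Continuous fun s : ℝ => ∫ t in (0:ℝ)..1, Q t s := by
      apply intervalIntegral.continuous_parametric_intervalIntegral_of_continuous'
        (f := fun s t => Q t s)
      exact hQcont.comp (by fun_prop : Continuous fun q : ℝ × ℝ => ((q.2, q.1) : ℝ × ℝ))
    rw [intervalIntegral.integral_add (hIPcont.intervalIntegrable 0 1)
      (hIQcont.intervalIntegrable 0 1)]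
    congr 1
    · simp_rw [hFTC_t]
    · rw [swap_gen (fun s t => Q t s)
        (hQcont.comp (by fun_prop : Continuous fun q : ℝ × ℝ => ((q.2, q.1) : ℝ × ℝ))) 0 1 0 1]
      simp_rw [hFTC_s]
  rw [show (eu : ℝ × ℝ × ℝ) = (1, 0, 0) from rfl] at key
  exact key ▸ main
end

section
/- Let E be a finite-dimensional real normed vector space, let d ≥ 1, and let η be a continuous alternating (d+1)-linear form on E. Let β : ℝ × ℝ × ℝ^d → E be a C² map, written β(u,t,q), which is ℤ^d-periodic in the last variable: β(u,t,q+k) = β(u,t,q) for all k ∈ ℤ^d. Assume: (a) ∂_u β(u,0,q) = 0 for all u ∈ ℝ and q ∈ ℝ^d, and (b) η(∂_u β, ∂_{q₁} β, …, ∂_{q_d} β)(u,1,q) = 0 for all u ∈ ℝ and q ∈ ℝ^d. Then the function u ↦ ∫_{[0,1]^d} ∫₀¹ η(∂_t β, ∂_{q₁} β, …, ∂_{q_d} β)(u,t,q) dt dq is constant on ℝ. -/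
open MeasureTheory
open Function

set_option linter.unusedSectionVars false
set_option maxHeartbeats 1000000


theorem aux_swap0 {E' : Type*} [AddCommGroup E'] [Module ℝ E'] {d : ℕ}
    (η : AlternatingMap ℝ E' ℝ (Fin (d+1))) (x y : E') (G : Fin d → E') (k : Fin d) :
    η (Fin.cons x (update G k y)) = - η (Fin.cons y (update G k x)) := by
  have hcomp : Fin.cons y (update G k x) =
      (Fin.cons x (update G k y) : Fin (d+1) → E') ∘ Equiv.swap 0 k.succ := by
    funext l
    refine Fin.cases ?_ (fun m => ?_) l
    · simp only [Function.comp_apply, Fin.cons_zero, Equiv.swap_apply_left, Fin.cons_succ,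
        update_self]
    · rcases eq_or_ne m k with rfl | hmk
      · simp only [Function.comp_apply, Fin.cons_succ, update_self, Equiv.swap_apply_right,
          Fin.cons_zero]
      · have h1 : (m.succ : Fin (d+1)) ≠ 0 := Fin.succ_ne_zero m
        have h2 : (m.succ : Fin (d+1)) ≠ k.succ := fun h => hmk (Fin.succ_injective _ h)
        simp only [Function.comp_apply, Equiv.swap_apply_of_ne_of_ne h1 h2, Fin.cons_succ,
          update_of_ne hmk]
  rw [hcomp, AlternatingMap.map_swap _ _ (Ne.symm (Fin.succ_ne_zero k)), neg_neg]

theorem aux_swap2 {E' : Type*} [AddCommGroup E'] [Module ℝ E'] {d : ℕ}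
    (η : AlternatingMap ℝ E' ℝ (Fin (d+1))) (z x c : E') (G : Fin d → E') {k i : Fin d}
    (hki : k ≠ i) :
    η (Fin.cons z (update (update G i x) k c)) =
      - η (Fin.cons z (update (update G k x) i c)) := by
  have hcomp : Fin.cons z (update (update G i x) k c) =
      (Fin.cons z (update (update G k x) i c) : Fin (d+1) → E') ∘
        Equiv.swap k.succ i.succ := by
    funext l
    refine Fin.cases ?_ (fun m => ?_) l
    · have h1 : (0 : Fin (d+1)) ≠ k.succ := (Fin.succ_ne_zero k).symm
      have h2 : (0 : Fin (d+1)) ≠ i.succ := (Fin.succ_ne_zero i).symm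
      simp only [Function.comp_apply, Equiv.swap_apply_of_ne_of_ne h1 h2, Fin.cons_zero]
    · rcases eq_or_ne m k with rfl | hmk
      · simp only [Function.comp_apply, Fin.cons_succ, update_self, Equiv.swap_apply_left,
          update_of_ne hki, update_of_ne (Ne.symm hki)]
      · rcases eq_or_ne m i with rfl | hmi
        · simp only [Function.comp_apply, Fin.cons_succ, Equiv.swap_apply_right,
            update_self, update_of_ne hki, update_of_ne (Ne.symm hki)]
        · have h1 : (m.succ : Fin (d+1)) ≠ k.succ := fun h => hmk (Fin.succ_injective _ h)
          have h2 : (m.succ : Fin (d+1)) ≠ i.succ := fun h => hmi (Fin.succ_injective _ h)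
          simp only [Function.comp_apply, Equiv.swap_apply_of_ne_of_ne h1 h2, Fin.cons_succ,
            update_of_ne hmk, update_of_ne hmi]
  rw [hcomp, AlternatingMap.map_swap]
  exact fun h => hki (Fin.succ_injective _ h)

theorem aux_alg {E' : Type*} [AddCommGroup E'] [Module ℝ E'] {P' : Type*} {d : ℕ}
    (η : AlternatingMap ℝ E' ℝ (Fin (d+1))) (Dv : P' → E') (b : P' → P' → E')
    (hsym : ∀ x y, b x y = b y x) (eu et : P') (e : Fin d → P') :
    (∑ i, η (update (fun j => Dv (Fin.cons (α := fun _ => P') et e j)) i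
        (b eu (Fin.cons (α := fun _ => P') et e i))))
    = (∑ i, η (update (fun j => Dv (Fin.cons (α := fun _ => P') eu e j)) i
        (b et (Fin.cons (α := fun _ => P') eu e i))))
    + ∑ k : Fin d, ∑ i, η (update (fun j => Dv (Fin.cons (α := fun _ => P') et (update e k eu) j)) i
        (b (e k) (Fin.cons (α := fun _ => P') et (update e k eu) i))) := by
  classical
  set G : Fin d → E' := fun j => Dv (e j) with hG
  have hc1 : (fun j => Dv (Fin.cons (α := fun _ => P') et e j)) = Fin.cons (Dv et) G := by
    funext l; exact Fin.cases rfl (fun m => rfl) l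
  have hc2 : (fun j => Dv (Fin.cons (α := fun _ => P') eu e j)) = Fin.cons (Dv eu) G := by
    funext l; exact Fin.cases rfl (fun m => rfl) l
  have hc3 : ∀ k, (fun j => Dv (Fin.cons (α := fun _ => P') et (update e k eu) j)) =
      Fin.cons (Dv et) (update G k (Dv eu)) := by
    intro k; funext l
    refine Fin.cases rfl (fun m => ?_) l
    simp only [Fin.cons_succ]
    rcases eq_or_ne m k with rfl | hmk
    · simp only [update_self]
    · simp only [update_of_ne hmk, hG]
  rw [hc1, hc2]
  simp only [hc3]
  rw [Fin.sum_univ_succ, Fin.sum_univ_succ]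
  simp only [Fin.cons_zero, Fin.cons_succ, Fin.update_cons_zero, ← Fin.cons_update]
  have expand3 : ∀ k : Fin d,
      (∑ i, η (update (Fin.cons (Dv et) (update G k (Dv eu))) i
        (b (e k) (Fin.cons (α := fun _ => P') et (update e k eu) i))))
      = η (Fin.cons (b (e k) et) (update G k (Dv eu)))
        + (η (Fin.cons (Dv et) (update G k (b (e k) eu)))
        + ∑ i ∈ Finset.univ.erase k, η (Fin.cons (Dv et)
            (update (update G k (Dv eu)) i (b (e k) (e i))))) := by
    intro k
    rw [Fin.sum_univ_succ]
    simp only [Fin.cons_zero, Fin.cons_succ, Fin.update_cons_zero, ← Fin.cons_update]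
    congr 1
    rw [← Finset.add_sum_erase _ _ (Finset.mem_univ k)]
    congr 1
    · rw [update_self, update_idem]
    · refine Finset.sum_congr rfl fun i hi => ?_
      rw [update_of_ne (Finset.ne_of_mem_erase hi)]
  simp only [expand3]
  rw [Finset.sum_add_distrib, Finset.sum_add_distrib]
  have hcross : ∑ k : Fin d, ∑ i ∈ Finset.univ.erase k,
      η (Fin.cons (Dv et) (update (update G k (Dv eu)) i (b (e k) (e i)))) = 0 := by
    set F : Fin d → Fin d → ℝ := fun k i =>
      η (Fin.cons (Dv et) (update (update G k (Dv eu)) i (b (e k) (e i)))) with hF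
    have hco : ∑ k : Fin d, ∑ i ∈ Finset.univ.erase k, F k i
        = ∑ i : Fin d, ∑ k ∈ Finset.univ.erase i, F k i := by
      refine Finset.sum_comm' ?_
      intro x y
      simp [Finset.mem_erase, ne_comm]
    have hanti : ∀ i : Fin d, ∀ k ∈ Finset.univ.erase i, F k i = - F i k := by
      intro i k hk
      have hki : k ≠ i := Finset.ne_of_mem_erase hk
      simp only [hF]
      rw [aux_swap2 η (Dv et) (Dv eu) (b (e i) (e k)) G hki, neg_neg,
        hsym (e i) (e k)]
    have hself : ∑ k : Fin d, ∑ i ∈ Finset.univ.erase k, F k i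
        = - ∑ k : Fin d, ∑ i ∈ Finset.univ.erase k, F k i := by
      conv_lhs => rw [hco]
      rw [← Finset.sum_neg_distrib]
      refine Finset.sum_congr rfl fun i _ => ?_
      rw [← Finset.sum_neg_distrib]
      exact Finset.sum_congr rfl fun k hk => hanti i k hk
    linarith
  rw [hcross, add_zero, hsym et eu]
  have hmatch : ∀ k : Fin d,
      η (Fin.cons (b (e k) et) (update G k (Dv eu)))
      = - η (Fin.cons (Dv eu) (update G k (b et (e k)))) := by
    intro k
    rw [hsym (e k) et]
    exact aux_swap0 η (b et (e k)) (Dv eu) G k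
  have hmatch2 : ∀ k : Fin d,
      η (Fin.cons (Dv et) (update G k (b (e k) eu)))
      = η (Fin.cons (Dv et) (update G k (b eu (e k)))) := by
    intro k; rw [hsym (e k) eu]
  simp only [hmatch, hmatch2]
  rw [Finset.sum_neg_distrib]
  abel

noncomputable def AA {E : Type*} [NormedAddCommGroup E] [NormedSpace ℝ E] {d : ℕ}
    (η : AlternatingMap ℝ E ℝ (Fin (d+1))) (β : ℝ × ℝ × (Fin d → ℝ) → E)
    (v : Fin (d+1) → ℝ × ℝ × (Fin d → ℝ)) (p : ℝ × ℝ × (Fin d → ℝ)) : ℝ :=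
  η fun i => fderiv ℝ β p (v i)

noncomputable def TT {E : Type*} [NormedAddCommGroup E] [NormedSpace ℝ E] {d : ℕ}
    (η : AlternatingMap ℝ E ℝ (Fin (d+1))) (β : ℝ × ℝ × (Fin d → ℝ) → E)
    (p w : ℝ × ℝ × (Fin d → ℝ)) (v : Fin (d+1) → ℝ × ℝ × (Fin d → ℝ)) : ℝ :=
  ∑ i, η (update (fun j => fderiv ℝ β p (v j)) i (fderiv ℝ (fderiv ℝ β) p w (v i)))

theorem aux_multilinear_continuous {ι : Type*} [Fintype ι] [DecidableEq ι]
    {E F : Type*} [NormedAddCommGroup E] [NormedSpace ℝ E] [FiniteDimensional ℝ E]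
    [NormedAddCommGroup F] [NormedSpace ℝ F]
    (f : MultilinearMap ℝ (fun _ : ι => E) F) : Continuous f := by
  set b := Module.finBasis ℝ E with hb
  have hv : ⇑f = fun v : ι → E =>
      ∑ m : ι → Fin (Module.finrank ℝ E), (∏ i, b.repr (v i) (m i)) • f (fun i => b (m i)) := by
    funext v
    conv_lhs => rw [show v = fun i => ∑ k, b.repr (v i) k • b k from
      funext fun i => (b.sum_repr (v i)).symm]
    rw [f.map_sum]
    exact Finset.sum_congr rfl fun m _ => f.map_smul_univ _ _
  rw [hv]
  refine continuous_finset_sum _ fun m _ => Continuous.smul ?_ continuous_const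
  refine continuous_finset_prod _ fun i _ => ?_
  exact ((b.coord (m i)).continuous_of_finiteDimensional).comp (continuous_apply i)

section

variable {E : Type*} [NormedAddCommGroup E] [NormedSpace ℝ E] [FiniteDimensional ℝ E]
  {d : ℕ} (η : AlternatingMap ℝ E ℝ (Fin (d+1))) {β : ℝ × ℝ × (Fin d → ℝ) → E}

/-- The bundled continuous multilinear map attached to `η`. -/
noncomputable def etaC (η : AlternatingMap ℝ E ℝ (Fin (d+1))) :
    ContinuousMultilinearMap ℝ (fun _ : Fin (d+1) => E) ℝ :=
  { η.toMultilinearMap with cont := aux_multilinear_continuous η.toMultilinearMap }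

theorem etaC_apply (v : Fin (d+1) → E) : etaC η v = η v := rfl

theorem aux_hasFDerivAt (hβ : ContDiff ℝ 2 β) (v : Fin (d+1) → ℝ × ℝ × (Fin d → ℝ))
    (p : ℝ × ℝ × (Fin d → ℝ)) :
    ∃ L : (ℝ × ℝ × (Fin d → ℝ)) →L[ℝ] ℝ,
      (∀ w, L w = TT η β p w v) ∧ HasFDerivAt (AA η β v) L p := by
  have hD : ContDiff ℝ 1 (fderiv ℝ β) := hβ.fderiv_right (by norm_num)
  have hDp : HasFDerivAt (fderiv ℝ β) (fderiv ℝ (fderiv ℝ β) p) p :=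
    ((hD.differentiable one_ne_zero) p).hasFDerivAt
  have hg : ∀ i : Fin (d+1), HasFDerivAt (fun q => fderiv ℝ β q (v i))
      ((ContinuousLinearMap.apply ℝ E (v i)).comp (fderiv ℝ (fderiv ℝ β) p)) p := by
    intro i
    exact ((ContinuousLinearMap.apply ℝ E (v i)).hasFDerivAt).comp p hDp
  have h := HasFDerivAt.multilinear_comp (etaC η) hg
  refine ⟨_, fun w => ?_, h⟩
  simp only [ContinuousLinearMap.sum_apply, ContinuousLinearMap.coe_comp', Function.comp_apply,
    ContinuousMultilinearMap.toContinuousLinearMap_apply]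
  rfl

theorem aux_contA (hβ : ContDiff ℝ 2 β) (v : Fin (d+1) → ℝ × ℝ × (Fin d → ℝ)) :
    Continuous (AA η β v) := by
  have hD : Continuous (fderiv ℝ β) := (hβ.fderiv_right (m := 1) (by norm_num)).continuous
  exact (aux_multilinear_continuous η.toMultilinearMap).comp
    (continuous_pi fun i => (ContinuousLinearMap.apply ℝ E (v i)).continuous.comp hD)

theorem aux_contT (hβ : ContDiff ℝ 2 β) (w : ℝ × ℝ × (Fin d → ℝ))
    (v : Fin (d+1) → ℝ × ℝ × (Fin d → ℝ)) :
    Continuous (fun p => TT η β p w v) := by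
  have hD : Continuous (fderiv ℝ β) := (hβ.fderiv_right (m := 1) (by norm_num)).continuous
  have hD1 : ContDiff ℝ 1 (fderiv ℝ β) := hβ.fderiv_right (by norm_num)
  have hB : Continuous (fderiv ℝ (fderiv ℝ β)) :=
    (hD1.fderiv_right (m := 0) (by norm_num)).continuous
  refine continuous_finset_sum _ fun i _ => ?_
  refine (aux_multilinear_continuous η.toMultilinearMap).comp (continuous_pi fun k => ?_)
  rcases eq_or_ne k i with rfl | hk
  · simp only [update_self]
    have : Continuous fun p => fderiv ℝ (fderiv ℝ β) p w :=
      (ContinuousLinearMap.apply ℝ ((ℝ × ℝ × (Fin d → ℝ)) →L[ℝ] E) w).continuous.comp hB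
    exact (ContinuousLinearMap.apply ℝ E (v k)).continuous.comp this
  · simp only [update_of_ne hk]
    exact (ContinuousLinearMap.apply ℝ E (v k)).continuous.comp hD

end

theorem aux_shift_fderiv {X Y : Type*} [NormedAddCommGroup X] [NormedSpace ℝ X]
    [NormedAddCommGroup Y] [NormedSpace ℝ Y] {f : X → Y} (hf : Differentiable ℝ f)
    (c : X) (h : ∀ x, f (x + c) = f x) (p : X) : fderiv ℝ f (p + c) = fderiv ℝ f p := by
  have h1 : HasFDerivAt (fun x : X => x + c) (ContinuousLinearMap.id ℝ X) p :=
    (hasFDerivAt_id p).add_const c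
  have h2 : HasFDerivAt (fun x => f (x + c))
      ((fderiv ℝ f (p + c)).comp (ContinuousLinearMap.id ℝ X)) p :=
    ((hf (p + c)).hasFDerivAt).comp p h1
  have h3 : (fun x => f (x + c)) = f := funext h
  rw [h3, ContinuousLinearMap.comp_id] at h2
  exact h2.fderiv.symm

section
variable {E : Type*} [NormedAddCommGroup E] [NormedSpace ℝ E] [FiniteDimensional ℝ E]
  {d : ℕ} (η : AlternatingMap ℝ E ℝ (Fin (d+1))) {β : ℝ × ℝ × (Fin d → ℝ) → E}


theorem aux_shifts (hβ : ContDiff ℝ 2 β) (c : ℝ × ℝ × (Fin d → ℝ))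
    (hc : ∀ p : ℝ × ℝ × (Fin d → ℝ), β (p + c) = β p) :
    (∀ p, fderiv ℝ β (p + c) = fderiv ℝ β p) ∧
      (∀ p, fderiv ℝ (fderiv ℝ β) (p + c) = fderiv ℝ (fderiv ℝ β) p) := by
  have hDdiff : Differentiable ℝ β := hβ.differentiable (by norm_num)
  have h1 : ∀ p, fderiv ℝ β (p + c) = fderiv ℝ β p := aux_shift_fderiv hDdiff c hc
  refine ⟨h1, ?_⟩
  have hD1 : Differentiable ℝ (fderiv ℝ β) :=
    (hβ.fderiv_right (m := 1) (by norm_num)).differentiable one_ne_zero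
  exact aux_shift_fderiv hD1 c h1

theorem aux_AA_shift (hβ : ContDiff ℝ 2 β) (c : ℝ × ℝ × (Fin d → ℝ))
    (hc : ∀ p : ℝ × ℝ × (Fin d → ℝ), β (p + c) = β p) (v : Fin (d+1) → ℝ × ℝ × (Fin d → ℝ))
    (p : ℝ × ℝ × (Fin d → ℝ)) :
    AA η β v (p + c) = AA η β v p := by
  simp only [AA, (aux_shifts hβ c hc).1 p]

theorem aux_key (hβ : ContDiff ℝ 2 β) (eu et : ℝ × ℝ × (Fin d → ℝ))
    (e : Fin d → ℝ × ℝ × (Fin d → ℝ)) (p : ℝ × ℝ × (Fin d → ℝ)) :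
    TT η β p eu (Fin.cons et e) = TT η β p et (Fin.cons eu e)
      + ∑ k : Fin d, TT η β p (e k) (Fin.cons et (update e k eu)) := by
  have hsym : ∀ x y, fderiv ℝ (fderiv ℝ β) p x y = fderiv ℝ (fderiv ℝ β) p y x :=
    fun x y => (hβ.contDiffAt.isSymmSndFDerivAt (by simp)) x y
  simpa only [TT] using aux_alg η (fun x => fderiv ℝ β p x)
    (fun x y => fderiv ℝ (fderiv ℝ β) p x y) hsym eu et e

theorem aux_hasDerivAt_u (hβ : ContDiff ℝ 2 β) (v : Fin (d+1) → ℝ × ℝ × (Fin d → ℝ))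
    (t : ℝ) (q : Fin d → ℝ) (u : ℝ) :
    HasDerivAt (fun u' : ℝ => AA η β v (u', t, q)) (TT η β (u, t, q) (1, 0, 0) v) u := by
  obtain ⟨L, hL, h⟩ := aux_hasFDerivAt η hβ v (u, t, q)
  have hγ : HasDerivAt (fun u' : ℝ => ((u', t, q) : ℝ × ℝ × (Fin d → ℝ)))
      ((1, 0, 0) : ℝ × ℝ × (Fin d → ℝ)) u :=
    (hasDerivAt_id u).prodMk (hasDerivAt_const u (t, q))
  have := h.comp_hasDerivAt u hγ
  rw [hL] at this
  exact this

theorem aux_hasDerivAt_t (hβ : ContDiff ℝ 2 β) (v : Fin (d+1) → ℝ × ℝ × (Fin d → ℝ))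
    (u : ℝ) (q : Fin d → ℝ) (t : ℝ) :
    HasDerivAt (fun t' : ℝ => AA η β v (u, t', q)) (TT η β (u, t, q) (0, 1, 0) v) t := by
  obtain ⟨L, hL, h⟩ := aux_hasFDerivAt η hβ v (u, t, q)
  have hγ : HasDerivAt (fun t' : ℝ => ((u, t', q) : ℝ × ℝ × (Fin d → ℝ)))
      ((0, 1, 0) : ℝ × ℝ × (Fin d → ℝ)) t :=
    (hasDerivAt_const t u).prodMk ((hasDerivAt_id t).prodMk (hasDerivAt_const t q))
  have := h.comp_hasDerivAt t hγ
  rw [hL] at this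
  exact this

theorem aux_hasFDerivAt_q (hβ : ContDiff ℝ 2 β) (v : Fin (d+1) → ℝ × ℝ × (Fin d → ℝ))
    (u t : ℝ) (q : Fin d → ℝ) :
    ∃ L : (Fin d → ℝ) →L[ℝ] ℝ, (∀ y, L y = TT η β (u, t, q) (0, 0, y) v) ∧
      HasFDerivAt (fun q' : Fin d → ℝ => AA η β v (u, t, q')) L q := by
  obtain ⟨L, hL, h⟩ := aux_hasFDerivAt η hβ v (u, t, q)
  have hγ : HasFDerivAt (fun q' : Fin d → ℝ => ((u, t, q') : ℝ × ℝ × (Fin d → ℝ)))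
      (((0 : (Fin d → ℝ) →L[ℝ] ℝ)).prod (((0 : (Fin d → ℝ) →L[ℝ] ℝ)).prod
        (ContinuousLinearMap.id ℝ (Fin d → ℝ)))) q :=
    (hasFDerivAt_const u q).prodMk ((hasFDerivAt_const t q).prodMk (hasFDerivAt_id q))
  refine ⟨_, fun y => ?_, by have := h.comp q hγ; exact this⟩
  rw [ContinuousLinearMap.coe_comp', Function.comp_apply, hL]
  rfl

end

theorem aux_div {E : Type*} [NormedAddCommGroup E] [NormedSpace ℝ E] [FiniteDimensional ℝ E]
    {n : ℕ} (η : AlternatingMap ℝ E ℝ (Fin (n+1+1))) {β : ℝ × ℝ × (Fin (n+1) → ℝ) → E}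
    (hβ : ContDiff ℝ 2 β)
    (hper : ∀ (u t : ℝ) (q : Fin (n+1) → ℝ) (kk : Fin (n+1) → ℤ),
      β (u, t, q + fun i => (kk i : ℝ)) = β (u, t, q))
    (u t : ℝ) (k : Fin (n+1)) (v : Fin (n+1+1) → ℝ × ℝ × (Fin (n+1) → ℝ)) :
    ∫ q in Set.Icc (0 : Fin (n+1) → ℝ) 1,
      TT η β (u, t, q) ((0:ℝ), (0:ℝ), Pi.single k 1) v = 0 := by
  classical
  set c : ℝ × ℝ × (Fin (n+1) → ℝ) := (0, 0, Pi.single k 1) with hc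
  have hcper : ∀ p, β (p + c) = β p := by
    rintro ⟨u', t', q'⟩
    have hs : (fun i => ((Pi.single k 1 : Fin (n+1) → ℤ) i : ℝ)) = Pi.single k 1 := by
      funext i
      rcases eq_or_ne i k with rfl | h
      · simp
      · simp [Pi.single_eq_of_ne h]
    show β (u' + 0, t' + 0, q' + Pi.single k 1) = β (u', t', q')
    rw [add_zero, add_zero, ← hs, hper]
  set K : (Fin (n+1) → ℝ) → ℝ := fun q => AA η β v (u, t, q) with hKdef
  have hKc : Continuous K := (aux_contA η hβ v).comp
    (continuous_const.prodMk (continuous_const.prodMk continuous_id))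
  have hKd : ∀ q : Fin (n+1) → ℝ, HasFDerivAt K (fderiv ℝ K q) q ∧
      ∀ y, fderiv ℝ K q y = TT η β (u, t, q) (0, 0, y) v := by
    intro q
    obtain ⟨L, hL, h⟩ := aux_hasFDerivAt_q η hβ v u t q
    have hfd : fderiv ℝ K q = L := h.fderiv
    exact ⟨hfd ▸ h, fun y => by rw [hfd, hL]⟩
  have hle : (0 : Fin (n+1) → ℝ) ≤ 1 := fun i => zero_le_one
  have hdiv := MeasureTheory.integral_divergence_of_hasFDerivAt_off_countable'
      (0 : Fin (n+1) → ℝ) 1 hle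
      (fun i q => if i = k then K q else 0)
      (fun i q => if i = k then fderiv ℝ K q else 0)
      ∅ Set.countable_empty
      (fun i => by
        rcases eq_or_ne i k with rfl | h
        · simpa using hKc.continuousOn
        · simp only [if_neg h]
          exact continuousOn_const)
      (fun x _ i => by
        rcases eq_or_ne i k with rfl | h
        · simpa using (hKd x).1
        · simp only [if_neg h]
          exact hasFDerivAt_const 0 x)
      (by
        have hsum : (fun x : Fin (n+1) → ℝ =>
            ∑ i, (if i = k then fderiv ℝ K x else 0) (Pi.single i 1))
            = fun x => TT η β (u, t, x) ((0:ℝ), (0:ℝ), Pi.single k 1) v := by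
          funext x
          rw [Finset.sum_eq_single k]
          · rw [if_pos rfl, (hKd x).2]
          · intro i _ h
            rw [if_neg h, ContinuousLinearMap.zero_apply]
          · intro h
            exact absurd (Finset.mem_univ k) h
        rw [hsum]
        exact ((aux_contT η hβ ((0:ℝ), (0:ℝ), Pi.single k 1) v).comp
          (continuous_const.prodMk (continuous_const.prodMk continuous_id))
          ).continuousOn.integrableOn_compact isCompact_Icc)
  have hRHS : (∑ i : Fin (n+1),
      ((∫ x in Set.Icc ((0 : Fin (n+1) → ℝ) ∘ i.succAbove) ((1 : Fin (n+1) → ℝ) ∘ i.succAbove),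
        (fun q => if i = k then K q else 0) (Fin.insertNth (α := fun _ => ℝ) i ((1 : Fin (n+1) → ℝ) i) x)) -
       ∫ x in Set.Icc ((0 : Fin (n+1) → ℝ) ∘ i.succAbove) ((1 : Fin (n+1) → ℝ) ∘ i.succAbove),
        (fun q => if i = k then K q else 0) (Fin.insertNth (α := fun _ => ℝ) i ((0 : Fin (n+1) → ℝ) i) x))) = 0 := by
    refine Finset.sum_eq_zero fun i _ => ?_
    rcases eq_or_ne i k with rfl | h
    · have hper' : ∀ x : Fin n → ℝ,
          K (Fin.insertNth (α := fun _ => ℝ) i ((1 : Fin (n+1) → ℝ) i) x)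
            = K (Fin.insertNth (α := fun _ => ℝ) i ((0 : Fin (n+1) → ℝ) i) x) := by
        intro x
        have hins : Fin.insertNth (α := fun _ => ℝ) i ((1 : Fin (n+1) → ℝ) i) x
            = Fin.insertNth (α := fun _ => ℝ) i ((0 : Fin (n+1) → ℝ) i) x + Pi.single i 1 := by
          funext j
          refine Fin.succAboveCases i ?_ (fun m => ?_) j
          · rw [Fin.insertNth_apply_same, Pi.add_apply, Fin.insertNth_apply_same,
              Pi.single_eq_same]
            norm_num
          · rw [Pi.add_apply, Fin.insertNth_apply_succAbove, Fin.insertNth_apply_succAbove,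
              Pi.single_eq_of_ne (Fin.succAbove_ne i m), add_zero]
        rw [hins]
        have hshift := aux_AA_shift η hβ c hcper v
          (u, t, Fin.insertNth (α := fun _ => ℝ) i ((0 : Fin (n+1) → ℝ) i) x)
        have heq : ((u, t, Fin.insertNth (α := fun _ => ℝ) i ((0 : Fin (n+1) → ℝ) i) x) :
              ℝ × ℝ × (Fin (n+1) → ℝ)) + c
            = (u, t, Fin.insertNth (α := fun _ => ℝ) i ((0 : Fin (n+1) → ℝ) i) x
                + Pi.single i 1) := by
          show ((u + 0, t + 0, _) : ℝ × ℝ × (Fin (n+1) → ℝ)) = _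
          rw [add_zero, add_zero]
        rw [heq] at hshift
        exact hshift
      simp only [eq_self_iff_true, if_true]
      rw [setIntegral_congr_fun measurableSet_Icc (fun x _ => hper' x)]
      exact sub_self _
    · simp only [if_neg h, integral_zero, sub_self]
  rw [show (fun q : Fin (n+1) → ℝ => TT η β (u, t, q) ((0:ℝ), (0:ℝ), Pi.single k 1) v)
    = fun x : Fin (n+1) → ℝ =>
        ∑ i, (if i = k then fderiv ℝ K x else 0) (Pi.single i 1) from by
      funext x
      rw [Finset.sum_eq_single k]
      · rw [if_pos rfl, (hKd x).2]
      · intro i _ h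
        rw [if_neg h, ContinuousLinearMap.zero_apply]
      · intro h
        exact absurd (Finset.mem_univ k) h]
  exact hdiv.trans hRHS

/-- (flat-target Claim 3.8) For a C² map `β : ℝ × ℝ × ℝ^d → E`, `ℤ^d`-periodic
in the last variable, a constant-coefficient alternating `(d+1)`-form `η`, with
`∂_u β(u,0,q) = 0` and `η(∂_u β, ∂_{q₁} β, …, ∂_{q_d} β)(u,1,q) = 0`, the flux
`u ↦ ∫_{[0,1]^d} ∫₀¹ η(∂_t β, ∂_{q₁} β, …, ∂_{q_d} β) dt dq` is constant. -/
theorem stmt_12 (E : Type*) [NormedAddCommGroup E] [NormedSpace ℝ E] [FiniteDimensional ℝ E]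
    (d : ℕ) (hd : 1 ≤ d) (η : AlternatingMap ℝ E ℝ (Fin (d + 1)))
    (β : ℝ × ℝ × (Fin d → ℝ) → E) (hβ : ContDiff ℝ 2 β)
    (hper : ∀ (u t : ℝ) (q : Fin d → ℝ) (k : Fin d → ℤ),
      β (u, t, q + fun i => (k i : ℝ)) = β (u, t, q))
    (ha : ∀ (u : ℝ) (q : Fin d → ℝ), fderiv ℝ β (u, 0, q) (1, 0, 0) = 0)
    (hb : ∀ (u : ℝ) (q : Fin d → ℝ),
      η (Fin.cons (fderiv ℝ β (u, 1, q) (1, 0, 0))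
        (fun j : Fin d => fderiv ℝ β (u, 1, q) (0, 0, Pi.single j 1))) = 0) :
    ∀ u₁ u₂ : ℝ,
      (∫ q in Set.univ.pi (fun _ : Fin d => Set.Icc (0:ℝ) 1), ∫ t in (0:ℝ)..1,
        η (Fin.cons (fderiv ℝ β (u₁, t, q) (0, 1, 0))
          (fun j : Fin d => fderiv ℝ β (u₁, t, q) (0, 0, Pi.single j 1)))) =
      (∫ q in Set.univ.pi (fun _ : Fin d => Set.Icc (0:ℝ) 1), ∫ t in (0:ℝ)..1,
        η (Fin.cons (fderiv ℝ β (u₂, t, q) (0, 1, 0))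
          (fun j : Fin d => fderiv ℝ β (u₂, t, q) (0, 0, Pi.single j 1)))) := by
  obtain ⟨n, rfl⟩ : ∃ n, d = n + 1 := ⟨d - 1, (Nat.succ_pred_eq_of_pos hd).symm⟩
  intro u₁ u₂
  classical
  set et : ℝ × ℝ × (Fin (n+1) → ℝ) := (0, 1, 0) with het
  set eu : ℝ × ℝ × (Fin (n+1) → ℝ) := (1, 0, 0) with heu
  set ee : Fin (n+1) → ℝ × ℝ × (Fin (n+1) → ℝ) := fun k => (0, 0, Pi.single k 1) with hee
  set vG : Fin (n+1+1) → ℝ × ℝ × (Fin (n+1) → ℝ) := Fin.cons et ee with hvG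
  set vH : Fin (n+1+1) → ℝ × ℝ × (Fin (n+1) → ℝ) := Fin.cons eu ee with hvH
  set vK : Fin (n+1) → Fin (n+1+1) → ℝ × ℝ × (Fin (n+1) → ℝ) :=
    fun k => Fin.cons et (update ee k eu) with hvK
  -- rewrite the box
  have hbox : (Set.univ.pi fun _ : Fin (n+1) => Set.Icc (0:ℝ) 1)
      = Set.Icc (0 : Fin (n+1) → ℝ) 1 := by
    ext x
    simp [Set.mem_pi, Pi.le_def, forall_and]
  -- convert interval integral to Ioc set integral
  have hio : ∀ f : ℝ → ℝ, (∫ t in (0:ℝ)..1, f t) = ∫ t in Set.Ioc (0:ℝ) 1, f t :=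
    fun f => intervalIntegral.integral_of_le zero_le_one
  -- identify the integrand with AA
  have hG : ∀ p : ℝ × ℝ × (Fin (n+1) → ℝ),
      η (Fin.cons (fderiv ℝ β p (0, 1, 0))
        (fun j : Fin (n+1) => fderiv ℝ β p (0, 0, Pi.single j 1))) = AA η β vG p := by
    intro p
    show _ = η _
    congr 1
    funext i
    refine Fin.cases ?_ (fun j => ?_) i
    · rw [Fin.cons_zero, hvG, Fin.cons_zero]
    · rw [Fin.cons_succ, hvG, Fin.cons_succ]
  simp only [hbox, hio, het, hG]
  -- basic continuity
  have hAc : ∀ v, Continuous (AA η β v) := fun v => aux_contA η hβ v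
  have hTc : ∀ w v, Continuous fun p => TT η β p w v := fun w v => aux_contT η hβ w v
  -- parametric integrability in q
  have hparam : ∀ (F : ℝ × ℝ × (Fin (n+1) → ℝ) → ℝ), Continuous F → ∀ u : ℝ,
      IntegrableOn (fun q => ∫ t in Set.Ioc (0:ℝ) 1, F (u, t, q))
        (Set.Icc (0 : Fin (n+1) → ℝ) 1) := by
    intro F hF u
    have h2 : IntegrableOn (fun z : ((Fin (n+1) → ℝ)) × ℝ => F (u, z.2, z.1))
        ((Set.Icc (0 : Fin (n+1) → ℝ) 1) ×ˢ Set.Icc (0:ℝ) 1) (volume.prod volume) := by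
      rw [← Measure.volume_eq_prod]
      exact ((hF.comp (continuous_const.prodMk
        (continuous_snd.prodMk continuous_fst))).continuousOn.integrableOn_compact
        (isCompact_Icc.prod isCompact_Icc))
    have h1 : Integrable (fun z : ((Fin (n+1) → ℝ)) × ℝ => F (u, z.2, z.1))
        ((volume.restrict (Set.Icc (0 : Fin (n+1) → ℝ) 1)).prod
          (volume.restrict (Set.Ioc (0:ℝ) 1))) := by
      rw [Measure.prod_restrict]
      exact h2.mono_set (Set.prod_mono subset_rfl Set.Ioc_subset_Icc_self)
    exact h1.integral_prod_left
  -- swap q and t integrals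
  have hswapQT : ∀ (F : ℝ × ℝ × (Fin (n+1) → ℝ) → ℝ), Continuous F → ∀ u : ℝ,
      (∫ q in Set.Icc (0 : Fin (n+1) → ℝ) 1, ∫ t in Set.Ioc (0:ℝ) 1, F (u, t, q))
        = ∫ t in Set.Ioc (0:ℝ) 1, ∫ q in Set.Icc (0 : Fin (n+1) → ℝ) 1, F (u, t, q) := by
    intro F hF u
    refine integral_integral_swap ?_
    have h2 : IntegrableOn (fun z : ((Fin (n+1) → ℝ)) × ℝ => F (u, z.2, z.1))
        ((Set.Icc (0 : Fin (n+1) → ℝ) 1) ×ˢ Set.Icc (0:ℝ) 1) (volume.prod volume) := by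
      rw [← Measure.volume_eq_prod]
      exact ((hF.comp (continuous_const.prodMk
        (continuous_snd.prodMk continuous_fst))).continuousOn.integrableOn_compact
        (isCompact_Icc.prod isCompact_Icc))
    rw [Measure.prod_restrict]
    exact h2.mono_set (Set.prod_mono subset_rfl Set.Ioc_subset_Icc_self)
  -- the key vanishing of the u-derivative of the flux
  have hCC : ∀ u : ℝ,
      (∫ q in Set.Icc (0 : Fin (n+1) → ℝ) 1, ∫ t in Set.Ioc (0:ℝ) 1,
        TT η β (u, t, q) eu vG) = 0 := by
    intro u
    have hkey : ∀ (t : ℝ) (q : Fin (n+1) → ℝ), TT η β (u, t, q) eu vG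
        = TT η β (u, t, q) et vH + ∑ k, TT η β (u, t, q) (ee k) (vK k) :=
      fun t q => aux_key η hβ eu et ee (u, t, q)
    have hti : ∀ (w v) (q : Fin (n+1) → ℝ),
        IntegrableOn (fun t => TT η β (u, t, q) w v) (Set.Ioc (0:ℝ) 1) :=
      fun w v q => ((hTc w v).comp
        (continuous_const.prodMk (continuous_id.prodMk continuous_const))).integrableOn_Ioc
    have hFTCt : ∀ q : Fin (n+1) → ℝ,
        (∫ t in Set.Ioc (0:ℝ) 1, TT η β (u, t, q) et vH) = 0 := by
      intro q
      rw [← intervalIntegral.integral_of_le zero_le_one]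
      rw [intervalIntegral.integral_eq_sub_of_hasDerivAt
        (fun t _ => aux_hasDerivAt_t η hβ vH u q t)
        (((hTc et vH).comp
          (continuous_const.prodMk (continuous_id.prodMk continuous_const))).intervalIntegrable 0 1)]
      have h1 : AA η β vH (u, 1, q) = 0 := by
        rw [← hb u q]
        show η _ = η _
        congr 1
        funext i
        refine Fin.cases ?_ (fun j => ?_) i
        · rw [hvH, Fin.cons_zero, Fin.cons_zero]
        · rw [hvH, Fin.cons_succ, Fin.cons_succ]
      have h0 : AA η β vH (u, 0, q) = 0 := by
        refine η.map_coord_zero 0 ?_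
        show fderiv ℝ β (u, 0, q) (vH 0) = 0
        rw [hvH, Fin.cons_zero]
        exact ha u q
      rw [h1, h0, sub_zero]
    have hptw : ∀ q : Fin (n+1) → ℝ,
        (∫ t in Set.Ioc (0:ℝ) 1, TT η β (u, t, q) eu vG)
        = ∑ k, ∫ t in Set.Ioc (0:ℝ) 1, TT η β (u, t, q) (ee k) (vK k) := by
      intro q
      rw [setIntegral_congr_fun measurableSet_Ioc (fun t _ => hkey t q)]
      rw [integral_add (hti et vH q)
        (integrable_finset_sum _ fun k _ => hti (ee k) (vK k) q)]
      rw [integral_finset_sum _ (fun k _ => hti (ee k) (vK k) q), hFTCt q, zero_add]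
    rw [setIntegral_congr_fun measurableSet_Icc (fun q _ => hptw q)]
    rw [integral_finset_sum _ (fun k _ => hparam _ (hTc (ee k) (vK k)) u)]
    refine Finset.sum_eq_zero fun k _ => ?_
    rw [hswapQT _ (hTc (ee k) (vK k)) u]
    have hz : ∀ t : ℝ, (∫ q in Set.Icc (0 : Fin (n+1) → ℝ) 1,
        TT η β (u, t, q) (ee k) (vK k)) = 0 := fun t => aux_div η hβ hper u t k (vK k)
    simp only [hz, integral_zero]
  -- main monotone statement
  suffices hmono : ∀ a b : ℝ, a ≤ b →
      (∫ q in Set.Icc (0 : Fin (n+1) → ℝ) 1, ∫ t in Set.Ioc (0:ℝ) 1, AA η β vG (a, t, q))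
      = (∫ q in Set.Icc (0 : Fin (n+1) → ℝ) 1, ∫ t in Set.Ioc (0:ℝ) 1, AA η β vG (b, t, q)) by
    rcases le_total u₁ u₂ with hc | hc
    · exact hmono _ _ hc
    · exact (hmono _ _ hc).symm
  intro a b hab
  -- FTC in u, pointwise
  have hftcu : ∀ (t : ℝ) (q : Fin (n+1) → ℝ),
      AA η β vG (b, t, q) - AA η β vG (a, t, q)
      = ∫ u in Set.Ioc a b, TT η β (u, t, q) eu vG := by
    intro t q
    rw [← intervalIntegral.integral_of_le hab]
    exact (intervalIntegral.integral_eq_sub_of_hasDerivAt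
      (fun u _ => aux_hasDerivAt_u η hβ vG t q u)
      (((hTc eu vG).comp
        (continuous_id.prodMk (continuous_const.prodMk continuous_const))).intervalIntegrable a b)).symm
  -- integrability of the inner double integral as a function of (q, u)
  have hWint : Integrable
      (Function.uncurry fun (q : Fin (n+1) → ℝ) (u : ℝ) =>
        ∫ t in Set.Ioc (0:ℝ) 1, TT η β (u, t, q) eu vG)
      ((volume.restrict (Set.Icc (0 : Fin (n+1) → ℝ) 1)).prod
        (volume.restrict (Set.Ioc a b))) := by
    have h2 : IntegrableOn (fun zt : ((Fin (n+1) → ℝ) × ℝ) × ℝ =>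
        TT η β (zt.1.2, zt.2, zt.1.1) eu vG)
        ((Set.Icc (0 : Fin (n+1) → ℝ) 1 ×ˢ Set.Icc a b) ×ˢ Set.Icc (0:ℝ) 1)
        ((volume.prod volume).prod volume) := by
      rw [← Measure.volume_eq_prod, ← Measure.volume_eq_prod]
      exact ((hTc eu vG).comp ((continuous_fst.snd).prodMk
        (continuous_snd.prodMk continuous_fst.fst))).continuousOn.integrableOn_compact
        ((isCompact_Icc.prod isCompact_Icc).prod isCompact_Icc)
    have hg : Integrable (fun zt : ((Fin (n+1) → ℝ) × ℝ) × ℝ =>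
        TT η β (zt.1.2, zt.2, zt.1.1) eu vG)
        ((((volume.restrict (Set.Icc (0 : Fin (n+1) → ℝ) 1)).prod
          (volume.restrict (Set.Ioc a b)))).prod (volume.restrict (Set.Ioc (0:ℝ) 1))) := by
      rw [Measure.prod_restrict, Measure.prod_restrict]
      exact h2.mono_set (Set.prod_mono
        (Set.prod_mono subset_rfl Set.Ioc_subset_Icc_self) Set.Ioc_subset_Icc_self)
    exact hg.integral_prod_left
  -- assemble
  have hdiff : (∫ q in Set.Icc (0 : Fin (n+1) → ℝ) 1, ∫ t in Set.Ioc (0:ℝ) 1,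
        AA η β vG (b, t, q))
      - (∫ q in Set.Icc (0 : Fin (n+1) → ℝ) 1, ∫ t in Set.Ioc (0:ℝ) 1,
        AA η β vG (a, t, q)) = 0 := by
    rw [← integral_sub (hparam _ (hAc vG) b) (hparam _ (hAc vG) a)]
    have hsub : ∀ q : Fin (n+1) → ℝ,
        ((∫ t in Set.Ioc (0:ℝ) 1, AA η β vG (b, t, q))
          - ∫ t in Set.Ioc (0:ℝ) 1, AA η β vG (a, t, q))
        = ∫ u in Set.Ioc a b, ∫ t in Set.Ioc (0:ℝ) 1, TT η β (u, t, q) eu vG := by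
      intro q
      have htiA : ∀ u' : ℝ, IntegrableOn (fun t => AA η β vG (u', t, q)) (Set.Ioc (0:ℝ) 1) :=
        fun u' => ((hAc vG).comp
          (continuous_const.prodMk (continuous_id.prodMk continuous_const))).integrableOn_Ioc
      rw [← integral_sub (htiA b) (htiA a)]
      rw [setIntegral_congr_fun measurableSet_Ioc (fun t _ => hftcu t q)]
      -- now swap t and u
      refine integral_integral_swap ?_
      have h2 : IntegrableOn (fun z : ℝ × ℝ => TT η β (z.2, z.1, q) eu vG)
          (Set.Icc (0:ℝ) 1 ×ˢ Set.Icc a b) (volume.prod volume) := by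
        rw [← Measure.volume_eq_prod]
        exact ((hTc eu vG).comp (continuous_snd.prodMk
          (continuous_fst.prodMk continuous_const))).continuousOn.integrableOn_compact
          (isCompact_Icc.prod isCompact_Icc)
      rw [Measure.prod_restrict]
      exact h2.mono_set (Set.prod_mono Set.Ioc_subset_Icc_self Set.Ioc_subset_Icc_self)
    rw [setIntegral_congr_fun measurableSet_Icc (fun q _ => hsub q)]
    rw [integral_integral_swap hWint]
    simp only [hCC, integral_zero]
  linarith [hdiff]
end
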